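/- Let E' ⊆ E(G) be a set of edges of the gadget graph G, none incident to u or to v. If Ric_{G−E'}({u,v}) < 0, then the bipartite graph (L_0, R_0, E_0 \ E') has no perfect matching. -/

import Mathlib

open Finset
open scoped Classical

variable {V : Type*}

/-- The open neighborhood of `u` in `G`, as a finset. -/
noncomputable def nbrF [Fintype V] (G : SimpleGraph V) (u : V) : Finset V :=
  Finset.univ.filter fun x => G.Adj u x

/-- The degree of `u` in `G`. -/
noncomputable def degG [Fintype V] (G : SimpleGraph V) (u : V) : ℕ := (nbrF G u).card

/-- The closed neighborhood `N[u]` of `u` in `G`. -/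
noncomputable def cnbr [Fintype V] (G : SimpleGraph V) (u : V) : Finset V :=
  insert u (nbrF G u)

/-- A transport plan for `(G,u,v)`: nonnegative, with row sums `1/(deg u + 1)` over
`N[u]` and column sums `1/(deg v + 1)` over `N[v]`. -/
def IsPlanG [Fintype V] (G : SimpleGraph V) (u v : V) (z : V → V → ℝ) : Prop :=
  (∀ x y, 0 ≤ z x y) ∧
  (∀ x ∈ cnbr G u, ∑ y ∈ cnbr G v, z x y = 1 / ((degG G u : ℝ) + 1)) ∧
  (∀ y ∈ cnbr G v, ∑ x ∈ cnbr G u, z x y = 1 / ((degG G v : ℝ) + 1))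

/-- The cost of a transport plan, with respect to shortest-path distance in `G`. -/
noncomputable def planCostG [Fintype V] (G : SimpleGraph V) (u v : V) (z : V → V → ℝ) : ℝ :=
  ∑ x ∈ cnbr G u, ∑ y ∈ cnbr G v, (G.dist x y : ℝ) * z x y

/-- The earth mover's distance `EMD_G(u,v)`: the minimum cost of a transport plan. -/
noncomputable def EMDG [Fintype V] (G : SimpleGraph V) (u v : V) : ℝ :=
  sInf {t | ∃ z, IsPlanG G u v z ∧ planCostG G u v z = t}

/-- The Ollivier–Ricci curvature of the edge `{u,v}`. -/
noncomputable def RicG [Fintype V] (G : SimpleGraph V) (u v : V) : ℝ :=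
  1 - EMDG G u v

/-- The five extra vertices `u, v, p, p', x` of the gadget graph. -/
inductive Extra where
  | u | v | p | p' | x
deriving DecidableEq

instance : Fintype Extra where
  elems := {Extra.u, Extra.v, Extra.p, Extra.p', Extra.x}
  complete := by intro a; cases a <;> simp

/-- The vertex set of the gadget graph: `L ⊔ R ⊔ {u,v,p,p',x}`. -/
abbrev GV (L R : Type*) := (L ⊕ R) ⊕ Extra

/-- The base edge relation of the gadget graph built from the bipartite graph
`H₀ = (L, R, E₀)`: the edge `{u,v}`; `{u,a}` for `a ∈ L`; `{v,b}` for `b ∈ R`;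
`{u,p}`; `{v,p'}`; `{p,x}`; `{p',x}`; and `{a,b}` whenever `E₀ a b`. -/
def gadgetRel {L R : Type*} (E0 : L → R → Prop) : GV L R → GV L R → Prop
  | Sum.inr .u, Sum.inr .v => True
  | Sum.inr .u, Sum.inl (Sum.inl _) => True
  | Sum.inr .v, Sum.inl (Sum.inr _) => True
  | Sum.inr .u, Sum.inr .p => True
  | Sum.inr .v, Sum.inr .p' => True
  | Sum.inr .p, Sum.inr .x => True
  | Sum.inr .p', Sum.inr .x => True
  | Sum.inl (Sum.inl a), Sum.inl (Sum.inr b) => E0 a b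
  | _, _ => False

/-- The gadget graph. -/
def gadget {L R : Type*} (E0 : L → R → Prop) : SimpleGraph (GV L R) :=
  SimpleGraph.fromRel (gadgetRel E0)

/-! A perfect matching `f` of the remaining bipartite graph yields a transport plan of cost at
most `1`: keep the mass at `u` and at `v` in place, move the mass at `p` to `p'` along the path
`p u v p'` (distance at most `3`), and the mass at each `a ∈ L` to `f a` along a matching edge
(distance `1`). The cost is at most `(3 + |L|) / |N[u]| = 1`, hence `Ric ≥ 0`. -/

section Transport

variable [Fintype V] (G : SimpleGraph V)

lemma mem_cnbr {u x : V} : x ∈ cnbr G u ↔ x = u ∨ G.Adj u x := by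
  simp [cnbr, nbrF]

lemma card_cnbr (u : V) : #(cnbr G u) = degG G u + 1 :=
  card_insert_of_notMem (by simp [nbrF])

lemma cnbr_eq_of_le {H : SimpleGraph V} {w : V} (hle : G ≤ H) (hkeep : ∀ x, H.Adj w x → G.Adj w x) :
    cnbr G w = cnbr H w := by
  ext x
  simp only [mem_cnbr]
  exact or_congr_right ⟨fun h => hle h, hkeep x⟩

lemma EMDG_le_planCostG {u v : V} {z : V → V → ℝ} (hz : IsPlanG G u v z) :
    EMDG G u v ≤ planCostG G u v z := by
  refine csInf_le ⟨0, ?_⟩ ⟨z, hz, rfl⟩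
  rintro _ ⟨w, hw, rfl⟩
  exact sum_nonneg fun x _ => sum_nonneg fun y _ => mul_nonneg (Nat.cast_nonneg _) (hw.1 x y)

noncomputable def permPlan (u : V) (σ : V ≃ V) (x y : V) : ℝ :=
  if σ x = y then 1 / ((degG G u : ℝ) + 1) else 0

variable {G} {u v : V} {σ : V ≃ V}

lemma degG_eq_of_equiv (hσ : ∀ x, x ∈ cnbr G u ↔ σ x ∈ cnbr G v) : degG G u = degG G v := by
  have := card_equiv σ hσ
  rw [card_cnbr, card_cnbr] at this
  omega

lemma isPlanG_permPlan (hσ : ∀ x, x ∈ cnbr G u ↔ σ x ∈ cnbr G v) :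
    IsPlanG G u v (permPlan G u σ) := by
  refine ⟨fun x y => ?_, fun x hx => ?_, fun y hy => ?_⟩
  · unfold permPlan
    split_ifs <;> positivity
  · simp only [permPlan, sum_ite_eq, (hσ x).1 hx, if_true]
  · have hy' : σ.symm y ∈ cnbr G u := (hσ _).2 (by rwa [σ.apply_symm_apply])
    simp only [permPlan, ← σ.eq_symm_apply, sum_ite_eq', hy', if_true, degG_eq_of_equiv hσ]

lemma planCostG_permPlan (hσ : ∀ x, x ∈ cnbr G u ↔ σ x ∈ cnbr G v) :
    planCostG G u v (permPlan G u σ) =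
      (∑ x ∈ cnbr G u, (G.dist x (σ x) : ℝ)) / #(cnbr G u) := by
  rw [planCostG, sum_div, card_cnbr]
  refine sum_congr rfl fun x hx => ?_
  simp only [permPlan, mul_ite, mul_zero, sum_ite_eq, (hσ x).1 hx, if_true]
  push_cast
  ring

lemma EMDG_le_of_equiv (hσ : ∀ x, x ∈ cnbr G u ↔ σ x ∈ cnbr G v) :
    EMDG G u v ≤ (∑ x ∈ cnbr G u, (G.dist x (σ x) : ℝ)) / #(cnbr G u) :=
  planCostG_permPlan hσ ▸ EMDG_le_planCostG G (isPlanG_permPlan hσ)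

end Transport

section Gadget

variable {L R : Type*} {E0 : L → R → Prop}

/-- Exchanges `a ↔ f a` between the two sides and `p ↔ p'`, fixing `u`, `v`, `x`. -/
def gadgetSwap (f : L ≃ R) : GV L R ≃ GV L R :=
  Equiv.sumCongr ((f.sumCongr f.symm).trans (Equiv.sumComm R L)) (Equiv.swap .p .p')

lemma dist_p_p'_le_three {G' : SimpleGraph (GV L R)}
    (hkeep : ∀ x y : GV L R, (gadget E0).Adj x y →
      (x = Sum.inr .u ∨ x = Sum.inr .v ∨ y = Sum.inr .u ∨ y = Sum.inr .v) → G'.Adj x y) :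
    G'.dist (Sum.inr .p) (Sum.inr .p') ≤ 3 := by
  have hpu : G'.Adj (Sum.inr .p) (Sum.inr .u) := hkeep _ _ (by simp [gadget, gadgetRel]) (by simp)
  have huv : G'.Adj (Sum.inr .u) (Sum.inr .v) := hkeep _ _ (by simp [gadget, gadgetRel]) (by simp)
  have hvp' : G'.Adj (Sum.inr .v) (Sum.inr .p') := hkeep _ _ (by simp [gadget, gadgetRel]) (by simp)
  simpa using G'.dist_le (.cons hpu (.cons huv (.cons hvp' .nil)))

variable [Fintype L] [Fintype R]

lemma mem_cnbr_gadget_iff_gadgetSwap_mem (f : L ≃ R) (x : GV L R) :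
    x ∈ cnbr (gadget E0) (Sum.inr .u) ↔ gadgetSwap f x ∈ cnbr (gadget E0) (Sum.inr .v) := by
  rcases x with (a | b) | (_ | _ | _ | _ | _) <;>
    simp [mem_cnbr, gadgetSwap, gadget, gadgetRel, Equiv.swap_apply_of_ne_of_ne]

lemma cnbr_gadget_u :
    cnbr (gadget E0) (Sum.inr .u) =
      {Sum.inr .u, Sum.inr .v, Sum.inr .p} ∪
        univ.map (Function.Embedding.inl.trans Function.Embedding.inl) := by
  ext x
  rcases x with (a | b) | (_ | _ | _ | _ | _) <;> simp [mem_cnbr, gadget, gadgetRel]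

variable {G' : SimpleGraph (GV L R)}

lemma sum_dist_gadgetSwap_le (f : L ≃ R)
    (hcnbr : cnbr G' (Sum.inr .u) = cnbr (gadget E0) (Sum.inr .u))
    (hpp' : G'.dist (Sum.inr .p) (Sum.inr .p') ≤ 3)
    (hf : ∀ a, G'.Adj (Sum.inl (Sum.inl a)) (Sum.inl (Sum.inr (f a)))) :
    ∑ x ∈ cnbr G' (Sum.inr .u), (G'.dist x (gadgetSwap f x) : ℝ) ≤ #(cnbr G' (Sum.inr .u)) := by
  have hdisj : Disjoint ({Sum.inr .u, Sum.inr .v, Sum.inr .p} : Finset (GV L R))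
      (univ.map (Function.Embedding.inl.trans Function.Embedding.inl)) := by
    simp [disjoint_left]
  rw [hcnbr, cnbr_gadget_u, sum_union hdisj, card_union_of_disjoint hdisj]
  simp [gadgetSwap, sum_map, Equiv.swap_apply_of_ne_of_ne, SimpleGraph.dist_eq_one_iff_adj.2 (hf _),
    hpp']

end Gadget

theorem stmt16_general {L R : Type*} [Fintype L] [Fintype R]
    (E0 : L → R → Prop)
    (G' : SimpleGraph (GV L R)) (hle : G' ≤ gadget E0)
    (hkeep : ∀ x y : GV L R, (gadget E0).Adj x y →
      (x = Sum.inr Extra.u ∨ x = Sum.inr Extra.v ∨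
       y = Sum.inr Extra.u ∨ y = Sum.inr Extra.v) → G'.Adj x y)
    (hneg : RicG G' (Sum.inr Extra.u) (Sum.inr Extra.v) < 0) :
    ¬ ∃ f : L ≃ R, ∀ a : L, G'.Adj (Sum.inl (Sum.inl a)) (Sum.inl (Sum.inr (f a))) := by
  rintro ⟨f, hf⟩
  have hu : cnbr G' (Sum.inr .u) = cnbr (gadget E0) (Sum.inr .u) :=
    cnbr_eq_of_le G' hle fun _ h => hkeep _ _ h (Or.inl rfl)
  have hv : cnbr G' (Sum.inr .v) = cnbr (gadget E0) (Sum.inr .v) :=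
    cnbr_eq_of_le G' hle fun _ h => hkeep _ _ h (Or.inr (Or.inl rfl))
  have hσ : ∀ x, x ∈ cnbr G' (Sum.inr .u) ↔ gadgetSwap f x ∈ cnbr G' (Sum.inr .v) := by
    rw [hu, hv]
    exact mem_cnbr_gadget_iff_gadgetSwap_mem f
  have hcost := sum_dist_gadgetSwap_le f hu (dist_p_p'_le_three hkeep) hf
  have hEMD : EMDG G' (Sum.inr .u) (Sum.inr .v) ≤ 1 :=
    (EMDG_le_of_equiv hσ).trans ((div_le_one (by rw [card_cnbr]; positivity)).2 hcost)
  rw [RicG] at hneg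
  linarith

/-- let `G'` be obtained from the gadget graph by deleting a set of edges
none of which is incident to `u` or to `v` (i.e. `G' ≤ gadget E₀` and every edge of the
gadget graph incident to `u` or `v` is still an edge of `G'`).  If `Ric_{G'}({u,v}) < 0`
then the bipartite graph `(L, R, E₀ \ E')` has no perfect matching. -/
theorem stmt16 {L R : Type*} [Fintype L] [Fintype R] (n : ℕ) (hn : 1 ≤ n)
    (hL : Fintype.card L = n) (hR : Fintype.card R = n)
    (E0 : L → R → Prop)
    (G' : SimpleGraph (GV L R)) (hle : G' ≤ gadget E0)
    (hkeep : ∀ x y : GV L R, (gadget E0).Adj x y →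
      (x = Sum.inr Extra.u ∨ x = Sum.inr Extra.v ∨
       y = Sum.inr Extra.u ∨ y = Sum.inr Extra.v) → G'.Adj x y)
    (hneg : RicG G' (Sum.inr Extra.u) (Sum.inr Extra.v) < 0) :
    ¬ ∃ f : L ≃ R, ∀ a : L, G'.Adj (Sum.inl (Sum.inl a)) (Sum.inl (Sum.inr (f a))) :=
  stmt16_general E0 G' hle hkeep hneg
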